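/- Let y be a nonnegative function on a relation R contained in S x T, where S = {s_1,...,s_m} and T = {t_1,...,t_p} are sorted lists, and suppose R is 'staircase-shaped': there is a function D such that (s_i, t_j) in R iff ell(s_i) + ell'(t_j) <= D, where ell and ell' are nondecreasing in the indices. Let gamma = sum over R of y. Define mu_S as the least k such that the total y-mass of pairs whose first coordinate is among s_1,...,s_k is at least gamma/2, and define mu_T symmetrically. Then every pair (s_i, t_j) with i <= mu_S and j <= mu_T belongs to R. -/

import Mathlib

/-!
Suppose `ℓ(i) + ℓ'(j) > D` with `i < μS` and `j < μT`. By monotonicity of `ℓ` and `ℓ'`, the whole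
block of pairs `(i', j')` with `i' ≥ i` and `j' ≥ j` lies outside `R`, so `y` vanishes there and
every unit of mass sits in a row before `i` or in a column before `j`. Minimality of `μS` and `μT`
makes each of these two prefix masses smaller than `γ / 2`, so the total mass would be below `γ`.
-/

open Finset

theorem Finset.sum_sum_le_sum_filter_add_sum_filter {α β M : Type*} [Fintype α] [Fintype β]
    [AddCommMonoid M] [PartialOrder M] [IsOrderedAddMonoid M]
    (f : α → β → M) (hf : ∀ a b, 0 ≤ f a b) (P : α → Prop) (Q : β → Prop)
    [DecidablePred P] [DecidablePred Q] (hPQ : ∀ a b, ¬ P a → ¬ Q b → f a b = 0) :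
    ∑ a, ∑ b, f a b ≤ ∑ a with P a, ∑ b, f a b + ∑ b with Q b, ∑ a, f a b := by
  calc ∑ a, ∑ b, f a b
      = ∑ a with P a, ∑ b, f a b + ∑ a with ¬ P a, ∑ b, f a b :=
        (sum_filter_add_sum_filter_not _ _ _).symm
    _ = ∑ a with P a, ∑ b, f a b + ∑ a with ¬ P a, ∑ b with Q b, f a b := by
        congr 1
        refine sum_congr rfl fun a ha => (sum_filter_of_ne fun b _ hb => ?_).symm
        by_contra hQ
        exact hb (hPQ a b (mem_filter.1 ha).2 hQ)
    _ ≤ ∑ a with P a, ∑ b, f a b + ∑ a, ∑ b with Q b, f a b := by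
        refine add_le_add le_rfl (sum_le_sum_of_subset_of_nonneg (filter_subset _ _) ?_)
        exact fun a _ _ => sum_nonneg fun b _ => hf a b
    _ = ∑ a with P a, ∑ b, f a b + ∑ b with Q b, ∑ a, f a b := by
        rw [sum_comm (s := univ)]

theorem not_add_le_of_le_of_le {α β M : Type*} [Preorder α] [Preorder β]
    [AddCommMonoid M] [PartialOrder M] [IsOrderedAddMonoid M]
    {ℓ : α → M} {ℓ' : β → M} (hℓ : Monotone ℓ) (hℓ' : Monotone ℓ') {D : M} {a a' : α} {b b' : β}
    (ha : a ≤ a') (hb : b ≤ b') (h : ¬ ℓ a + ℓ' b ≤ D) : ¬ ℓ a' + ℓ' b' ≤ D :=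
  fun h' => h ((add_le_add (hℓ ha) (hℓ' hb)).trans h')

theorem stmt_4_general (m p : ℕ) (ell : Fin m → ℕ) (ell' : Fin p → ℕ)
    (hell : Monotone ell) (hell' : Monotone ell') (D : ℕ)
    (y : Fin m → Fin p → ℝ) (hy : ∀ i j, 0 ≤ y i j)
    (hsupp : ∀ i j, ¬ (ell i + ell' j ≤ D) → y i j = 0)
    (γ : ℝ) (hγ : γ = ∑ i, ∑ j, y i j)
    (μS μT : ℕ)
    (hμS : μS = sInf {k : ℕ | γ / 2 ≤ ∑ i ∈ Finset.univ.filter (fun i : Fin m => i.val + 1 ≤ k), ∑ j, y i j})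
    (hμT : μT = sInf {k : ℕ | γ / 2 ≤ ∑ j ∈ Finset.univ.filter (fun j : Fin p => j.val + 1 ≤ k), ∑ i, y i j}) :
    ∀ i : Fin m, ∀ j : Fin p, i.val < μS → j.val < μT → ell i + ell' j ≤ D := by
  intro i j hi hj
  by_contra h
  have hrows := Nat.notMem_of_lt_sInf (hμS ▸ hi)
  have hcols := Nat.notMem_of_lt_sInf (hμT ▸ hj)
  simp only [Set.mem_ofPred_eq, not_le] at hrows hcols
  have hsplit := sum_sum_le_sum_filter_add_sum_filter y hy (fun i' : Fin m => i'.val + 1 ≤ i.val)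
    (fun j' : Fin p => j'.val + 1 ≤ j.val) fun i' j' hi' hj' =>
      hsupp i' j' (not_add_le_of_le_of_le hell hell' (Fin.le_def.2 (by omega))
        (Fin.le_def.2 (by omega)) h)
  linarith

/-- In a staircase-shaped relation `R = {(i,j) : ℓ(i) + ℓ'(j) ≤ D}` with
nonnegative weights `y` supported on `R` of total mass `γ`, if `μS` and `μT`
are the median prefix indices (least prefix lengths whose mass reaches `γ/2`),
then every pair with first index below `μS` and second index below `μT`
belongs to `R`. -/
theorem stmt_4 (m p : ℕ) (ell : Fin m → ℕ) (ell' : Fin p → ℕ)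
    (hell : Monotone ell) (hell' : Monotone ell') (D : ℕ)
    (y : Fin m → Fin p → ℝ) (hy : ∀ i j, 0 ≤ y i j)
    (hsupp : ∀ i j, ¬ (ell i + ell' j ≤ D) → y i j = 0)
    (γ : ℝ) (hγ : γ = ∑ i, ∑ j, y i j) (hpos : 0 < γ)
    (μS μT : ℕ)
    (hμS : μS = sInf {k : ℕ | γ / 2 ≤ ∑ i ∈ Finset.univ.filter (fun i : Fin m => i.val + 1 ≤ k), ∑ j, y i j})
    (hμT : μT = sInf {k : ℕ | γ / 2 ≤ ∑ j ∈ Finset.univ.filter (fun j : Fin p => j.val + 1 ≤ k), ∑ i, y i j}) :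
    ∀ i : Fin m, ∀ j : Fin p, i.val < μS → j.val < μT → ell i + ell' j ≤ D :=
  stmt_4_general m p ell ell' hell hell' D y hy hsupp γ hγ μS μT hμS hμT
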